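/- arXiv:1809.02334 — 3 statements merged into one kernel-verified Lean document; each statement's English description precedes it below -/
import Mathlib

section
/- Let A be an M × r complex matrix, and let S be a set of n row indices (n ≥ r) such that the submatrix Â₀ = A_S has full column rank r, i.e. Â₀ᴴ Â₀ is invertible. Set C₀ = A Â₀⁺ where Â₀⁺ = (Â₀ᴴ Â₀)^{-1} Â₀ᴴ is the Moore–Penrose pseudoinverse of Â₀. Then for every row index i ∉ S, the submatrix Â = A_{S∪{i}} obtained by appending the i-th row of A satisfies det(Âᴴ Â) = det(Â₀ᴴ Â₀) · (1 + ‖(C₀)_{i,:}‖₂²), i.e., the squared volume is multiplied by 1 + l_{0,i} where l_{0,i} = ‖(C₀)_{i,:}‖₂² is the squared Euclidean norm of the i-th row of C₀. -/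
open Matrix BigOperators

/-- The submatrix of `A` consisting of the rows indexed by the finite set `S`. -/
def rowsSub {M r : ℕ} (A : Matrix (Fin M) (Fin r) ℂ) (S : Finset (Fin M)) :
    Matrix {x // x ∈ S} (Fin r) ℂ :=
  A.submatrix (fun x : {x // x ∈ S} => (x : Fin M)) id

/-- `C₀ = A Â₀⁺` where `Â₀ = A_S` and `Â₀⁺ = (Â₀ᴴ Â₀)⁻¹ Â₀ᴴ`. -/
noncomputable def C0 {M r : ℕ} (A : Matrix (Fin M) (Fin r) ℂ) (S : Finset (Fin M)) :
    Matrix (Fin M) {x // x ∈ S} ℂ :=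
  A * (((rowsSub A S)ᴴ * rowsSub A S)⁻¹ * (rowsSub A S)ᴴ)

/-!
Adding the row `a = A i` to `Â₀` adds the rank-one term `aᴴ a` to the Gram matrix `N = Â₀ᴴ Â₀`,
so by the matrix determinant lemma `det(N + aᴴ a) = det N · (1 + a N⁻¹ aᴴ)`. Since
`Â₀⁺ (Â₀⁺)ᴴ = N⁻¹`, the scalar `a N⁻¹ aᴴ` is the squared norm of `a Â₀⁺ = (C₀)_{i,:}`.
-/

namespace Matrix

theorem det_add_vecMulVec {n α : Type*} [Fintype n] [DecidableEq n] [CommRing α]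
    {A : Matrix n n α} (hA : IsUnit A.det) (u v : n → α) :
    (A + vecMulVec u v).det = A.det * (1 + v ⬝ᵥ A⁻¹ *ᵥ u) := by
  rw [vecMulVec_eq Unit, det_add_replicateCol_mul_replicateRow hA, Matrix.mul_assoc,
    ← replicateCol_mulVec, det_unique (1 + _ : Matrix Unit Unit α), add_apply, one_apply_eq,
    replicateRow_mul_replicateCol_apply]

section Pseudoinverse

variable {κ 𝕜 : Type*} [Fintype κ] [RCLike 𝕜]

theorem sum_norm_sq_eq_dotProduct_star (w : κ → 𝕜) :
    ((∑ k, ‖w k‖ ^ 2 : ℝ) : 𝕜) = w ⬝ᵥ star w := by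
  simp only [dotProduct, Pi.star_apply, RCLike.star_def, RCLike.mul_conj, RCLike.ofReal_sum,
    RCLike.ofReal_pow]

variable {n : Type*} [Fintype n] [DecidableEq n]

theorem pinv_mul_conjTranspose_pinv {B : Matrix κ n 𝕜} (hB : IsUnit (Bᴴ * B).det) :
    ((Bᴴ * B)⁻¹ * Bᴴ) * ((Bᴴ * B)⁻¹ * Bᴴ)ᴴ = (Bᴴ * B)⁻¹ := by
  have hN : (Bᴴ * B)⁻¹ᴴ = (Bᴴ * B)⁻¹ := by
    rw [conjTranspose_nonsing_inv, conjTranspose_mul, conjTranspose_conjTranspose]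
  rw [conjTranspose_mul, conjTranspose_conjTranspose, hN, Matrix.mul_assoc,
    ← Matrix.mul_assoc Bᴴ, Matrix.mul_nonsing_inv _ hB, Matrix.mul_one]

theorem sum_norm_sq_vecMul_pinv {B : Matrix κ n 𝕜} (hB : IsUnit (Bᴴ * B).det) (a : n → 𝕜) :
    ((∑ k, ‖(a ᵥ* ((Bᴴ * B)⁻¹ * Bᴴ)) k‖ ^ 2 : ℝ) : 𝕜) = a ⬝ᵥ (Bᴴ * B)⁻¹ *ᵥ star a := by
  rw [sum_norm_sq_eq_dotProduct_star, star_vecMul, dotProduct_mulVec, vecMul_vecMul,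
    pinv_mul_conjTranspose_pinv hB, ← dotProduct_mulVec]

end Pseudoinverse

end Matrix

theorem conjTranspose_mul_self_rowsSub_insert {M r : ℕ} (A : Matrix (Fin M) (Fin r) ℂ)
    {S : Finset (Fin M)} {i : Fin M} (hi : i ∉ S) :
    (rowsSub A (insert i S))ᴴ * rowsSub A (insert i S)
      = (rowsSub A S)ᴴ * rowsSub A S + vecMulVec (star (A i)) (A i) := by
  ext j k
  simp only [mul_apply, conjTranspose_apply, rowsSub, submatrix_apply, id_eq, Matrix.add_apply,
    vecMulVec_apply, Pi.star_apply]
  rw [Finset.sum_coe_sort (insert i S) (fun x => star (A x j) * A x k), Finset.sum_insert hi,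
    ← Finset.sum_coe_sort S (fun x => star (A x j) * A x k), add_comm]

theorem statement6_general (M r : ℕ)
    (A : Matrix (Fin M) (Fin r) ℂ) (S : Finset (Fin M))
    (hinv : IsUnit ((rowsSub A S)ᴴ * rowsSub A S).det) :
    ∀ i ∉ S,
      ((rowsSub A (insert i S))ᴴ * rowsSub A (insert i S)).det
        = ((rowsSub A S)ᴴ * rowsSub A S).det
            * (((1 + ∑ k, ‖C0 A S i k‖ ^ 2 : ℝ) : ℂ)) := by
  intro i hi
  have hlev : ((∑ k, ‖C0 A S i k‖ ^ 2 : ℝ) : ℂ)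
      = A i ⬝ᵥ ((rowsSub A S)ᴴ * rowsSub A S)⁻¹ *ᵥ star (A i) :=
    sum_norm_sq_vecMul_pinv hinv (A i)
  rw [conjTranspose_mul_self_rowsSub_insert A hi, det_add_vecMulVec hinv, Complex.ofReal_add,
    Complex.ofReal_one, hlev]

/-- Appending a row `i ∉ S` to the full-column-rank submatrix `Â₀ = A_S` multiplies the
squared volume `det(Âᴴ Â)` by `1 + ‖(C₀)_{i,:}‖₂²`, where `C₀ = A Â₀⁺`. -/
theorem statement6 (M r n : ℕ) (hrn : r ≤ n)
    (A : Matrix (Fin M) (Fin r) ℂ) (S : Finset (Fin M)) (hS : S.card = n)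
    (hinv : IsUnit ((rowsSub A S)ᴴ * rowsSub A S).det) :
    ∀ i ∉ S,
      ((rowsSub A (insert i S))ᴴ * rowsSub A (insert i S)).det
        = ((rowsSub A S)ᴴ * rowsSub A S).det
            * (((1 + ∑ k, ‖C0 A S i k‖ ^ 2 : ℝ) : ℂ)) :=
  statement6_general M r A S hinv
end

section
/- Let A be an M × r complex matrix, and let S be a set of n row indices (n ≥ r) such that the submatrix Â₀ = A_S has full column rank r, i.e. Â₀ᴴ Â₀ is invertible. Set C₀ = A Â₀⁺ where Â₀⁺ = (Â₀ᴴ Â₀)^{-1} Â₀ᴴ, and for each row index k let l_{0,k} = ‖(C₀)_{k,:}‖₂². Then for every i ∉ S and every j ∈ S, the submatrix Â' = A_{(S\{j})∪{i}} obtained by replacing the j-th row of Â₀ with the i-th row of A satisfies det((Â')ᴴ Â') = B_{i,j} · det(Â₀ᴴ Â₀), where B_{i,j} = |(C₀)_{i,j'}|² + (1 + l_{0,i})(1 − l_{0,j}) and (C₀)_{i,j'} denotes the entry of C₀ in row i and in the column corresponding to the selected row j of Â₀. -/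
/-!
The new Gram matrix is a rank-two update of `G = Â₀ᴴ Â₀`: it equals
`G + Rᴴ D R`, where `R` stacks rows `i` and `j` of `A` and `D = diag(1, -1)`. The matrix
determinant lemma turns its determinant into `det G · det(I₂ + D R G⁻¹ Rᴴ)`, and `R G⁻¹ Rᴴ`
is the `{i, j}` block of the Hermitian matrix `A G⁻¹ Aᴴ = C₀ C₀ᴴ`, whose diagonal entries are
the `l₀,ₖ` and whose `(i, j)` entry is `(C₀)_{i,j}`.
-/

open Matrix BigOperators

/-- The squared Euclidean norm `l_{0,k}` of the `k`-th row of `C₀`. -/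
noncomputable def l0 {M r : ℕ} (A : Matrix (Fin M) (Fin r) ℂ) (S : Finset (Fin M))
    (k : Fin M) : ℝ :=
  ∑ t, ‖C0 A S k t‖ ^ 2

theorem Matrix.mul_conjTranspose_self_apply_self {𝕜 m n : Type*} [RCLike 𝕜] [Fintype n]
    (C : Matrix m n 𝕜) (k : m) : (C * Cᴴ) k k = ((∑ t, ‖C k t‖ ^ 2 : ℝ) : 𝕜) := by
  simp only [mul_apply, conjTranspose_apply, RCLike.star_def, RCLike.mul_conj]
  push_cast
  rfl

theorem Matrix.det_one_add_diagonal_one_neg_one_mul {R : Type*} [CommRing R]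
    (Q : Matrix (Fin 2) (Fin 2) R) :
    (1 + diagonal ![1, -1] * Q).det = (1 + Q 0 0) * (1 - Q 1 1) + Q 0 1 * Q 1 0 := by
  simp only [det_fin_two, Matrix.add_apply, diagonal_mul, one_apply_eq, one_apply_ne zero_ne_one,
    one_apply_ne one_ne_zero, cons_val_zero, cons_val_one, cons_val_fin_one]
  ring

theorem Matrix.submatrix_mul_mul_conjTranspose {l m n α : Type*} [Fintype n] [CommSemiring α]
    [StarRing α] (A : Matrix m n α) (N : Matrix n n α) (f : l → m) :
    (A * N * Aᴴ).submatrix f f = A.submatrix f id * N * (A.submatrix f id)ᴴ := by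
  rw [submatrix_mul _ _ f id f Function.bijective_id, submatrix_mul _ _ f id id
    Function.bijective_id, conjTranspose_submatrix, submatrix_id_id]

section rowsSub

variable {M r : ℕ} (A : Matrix (Fin M) (Fin r) ℂ)

theorem conjTranspose_rowsSub_mul_self (T : Finset (Fin M)) :
    (rowsSub A T)ᴴ * rowsSub A T = ∑ k ∈ T, vecMulVec (star (A k)) (A k) := by
  ext a b
  simp only [mul_apply, conjTranspose_apply, rowsSub, submatrix_apply, id_eq, Matrix.sum_apply,
    vecMulVec_apply, Pi.star_apply]
  exact Finset.sum_coe_sort T (fun k => star (A k a) * A k b)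

theorem conjTranspose_rowsSub_mul_self_insert_erase {S : Finset (Fin M)} {i j : Fin M}
    (hi : i ∉ S) (hj : j ∈ S) :
    (rowsSub A (insert i (S.erase j)))ᴴ * rowsSub A (insert i (S.erase j)) =
      (rowsSub A S)ᴴ * rowsSub A S +
        (A.submatrix ![i, j] id)ᴴ * (diagonal ![(1 : ℂ), -1] * A.submatrix ![i, j] id) := by
  have hrank2 : (A.submatrix ![i, j] id)ᴴ * (diagonal ![(1 : ℂ), -1] * A.submatrix ![i, j] id) =
      vecMulVec (star (A i)) (A i) - vecMulVec (star (A j)) (A j) := by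
    ext a b
    rw [mul_apply, Fin.sum_univ_two]
    simp only [conjTranspose_apply, submatrix_apply, id_eq, diagonal_mul,
      Matrix.sub_apply, vecMulVec_apply, Pi.star_apply, cons_val_zero, cons_val_one]
    ring
  rw [hrank2, conjTranspose_rowsSub_mul_self, conjTranspose_rowsSub_mul_self,
    Finset.sum_insert (mt Finset.mem_of_mem_erase hi), Finset.sum_erase_eq_sub hj]
  abel

theorem C0_eq_submatrix (S : Finset (Fin M)) :
    C0 A S = (A * ((rowsSub A S)ᴴ * rowsSub A S)⁻¹ * Aᴴ).submatrix id Subtype.val := by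
  rw [C0, ← Matrix.mul_assoc, submatrix_mul _ _ id id _ Function.bijective_id, rowsSub,
    ← conjTranspose_submatrix]
  rfl

theorem C0_mul_conjTranspose_C0 {S : Finset (Fin M)}
    (hinv : IsUnit ((rowsSub A S)ᴴ * rowsSub A S).det) :
    C0 A S * (C0 A S)ᴴ = A * ((rowsSub A S)ᴴ * rowsSub A S)⁻¹ * Aᴴ := by
  rw [C0, conjTranspose_mul, conjTranspose_mul, conjTranspose_conjTranspose,
    conjTranspose_nonsing_inv, (isHermitian_conjTranspose_mul_self _).eq]
  simp only [Matrix.mul_assoc]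
  rw [← Matrix.mul_assoc (rowsSub A S)ᴴ, nonsing_inv_mul_cancel_left _ _ hinv]

theorem C0_apply_eq_C0_mul_conjTranspose_apply {S : Finset (Fin M)}
    (hinv : IsUnit ((rowsSub A S)ᴴ * rowsSub A S).det) (k : Fin M) {j : Fin M} (hj : j ∈ S) :
    C0 A S k ⟨j, hj⟩ = (C0 A S * (C0 A S)ᴴ) k j := by
  rw [C0_mul_conjTranspose_C0 A hinv, C0_eq_submatrix]
  rfl

end rowsSub

theorem statement7_general (M r : ℕ)
    (A : Matrix (Fin M) (Fin r) ℂ) (S : Finset (Fin M))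
    (hinv : IsUnit ((rowsSub A S)ᴴ * rowsSub A S).det) :
    ∀ i ∉ S, ∀ j, ∀ hj : j ∈ S,
      ((rowsSub A (insert i (S.erase j)))ᴴ * rowsSub A (insert i (S.erase j))).det
        = (((‖C0 A S i ⟨j, hj⟩‖ ^ 2 + (1 + l0 A S i) * (1 - l0 A S j) : ℝ)) : ℂ)
            * ((rowsSub A S)ᴴ * rowsSub A S).det := by
  intro i hi j hj
  have hblock : diagonal ![(1 : ℂ), -1] * A.submatrix ![i, j] id *
      ((rowsSub A S)ᴴ * rowsSub A S)⁻¹ * (A.submatrix ![i, j] id)ᴴ =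
      diagonal ![1, -1] * (C0 A S * (C0 A S)ᴴ).submatrix ![i, j] ![i, j] := by
    rw [C0_mul_conjTranspose_C0 A hinv, submatrix_mul_mul_conjTranspose]
    simp only [Matrix.mul_assoc]
  have hdiag (k : Fin M) : (C0 A S * (C0 A S)ᴴ) k k = (l0 A S k : ℂ) :=
    mul_conjTranspose_self_apply_self _ k
  have hoff : (C0 A S * (C0 A S)ᴴ) i j * (C0 A S * (C0 A S)ᴴ) j i =
      ((‖C0 A S i ⟨j, hj⟩‖ ^ 2 : ℝ) : ℂ) := by
    rw [← (isHermitian_mul_conjTranspose_self (C0 A S)).apply j i,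
      ← C0_apply_eq_C0_mul_conjTranspose_apply A hinv i hj, Complex.ofReal_pow]
    exact Complex.mul_conj' _
  rw [conjTranspose_rowsSub_mul_self_insert_erase A hi hj, det_add_mul _ _ hinv, hblock,
    det_one_add_diagonal_one_neg_one_mul]
  simp only [submatrix_apply, cons_val_zero, cons_val_one, hdiag, hoff]
  push_cast
  ring

/-- Replacing row `j ∈ S` of the full-column-rank submatrix `Â₀ = A_S` by row `i ∉ S`
multiplies the squared volume by `B_{i,j} = |(C₀)_{i,j}|² + (1 + l_{0,i})(1 − l_{0,j})`. -/
theorem statement7 (M r n : ℕ) (hrn : r ≤ n)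
    (A : Matrix (Fin M) (Fin r) ℂ) (S : Finset (Fin M)) (hS : S.card = n)
    (hinv : IsUnit ((rowsSub A S)ᴴ * rowsSub A S).det) :
    ∀ i ∉ S, ∀ j, ∀ hj : j ∈ S,
      ((rowsSub A (insert i (S.erase j)))ᴴ * rowsSub A (insert i (S.erase j))).det
        = (((‖C0 A S i ⟨j, hj⟩‖ ^ 2 + (1 + l0 A S i) * (1 - l0 A S j) : ℝ)) : ℂ)
            * ((rowsSub A S)ᴴ * rowsSub A S).det :=
  statement7_general M r A S hinv
end

section
/- Let R be an r × N complex matrix of full row rank r (R Rᴴ invertible), and let r ≤ n ≤ N. Let S be a set of n column indices such that the r × n submatrix Â = R_{:,S} has nonzero volume (det(Â Âᴴ) ≠ 0) and has locally maximal volume with respect to single-column exchanges: for every j ∈ S and every i ∉ S, det(R_{:,(S\{j})∪{i}} (R_{:,(S\{j})∪{i}})ᴴ) ≤ det(Â Âᴴ). Then for every vector x ∈ ℂ^N, ‖Â⁺ (R x)‖₂² ≤ (1 + r(N−n)/(n−r+1)) · ‖x‖₂², where Â⁺ = Âᴴ(Â Âᴴ)^{-1} is the Moore–Penrose pseudoinverse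 of Â; equivalently, ‖Â⁺ R‖₂ ≤ √(1 + r(N−n)/(n−r+1)). -/
/-!
Write `A = R_{:,S}`, `G = A Aᴴ`, `P = A⁺A` (the orthogonal projection onto the row space of `A`,
of trace `r`) and `cᵢ = A⁺ R_{:,i}`. Exchanging the column `j ∈ S` for `i ∉ S` turns `G` into the
rank-two update `G + R_{:,i} R_{:,i}ᴴ - R_{:,j} R_{:,j}ᴴ`, whose determinant is `det G` times
`(1 + ‖cᵢ‖²)(1 - P_{jj}) + |(cᵢ)_j|²`. Local maximality bounds each of these `n` factors by `1`,
and summing them over `j ∈ S` gives `(n - r + 1)‖cᵢ‖² ≤ r`. Finally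
`A⁺ R x = P x_S + ∑_{i ∉ S} xᵢ cᵢ`; since `‖P x_S‖ ≤ ‖x_S‖`, Cauchy–Schwarz finishes the proof.
-/

open Matrix BigOperators

def colsSub {r N : ℕ} (R : Matrix (Fin r) (Fin N) ℂ) (S : Finset (Fin N)) :
    Matrix (Fin r) {x // x ∈ S} ℂ :=
  R.submatrix id (fun x : {x // x ∈ S} => (x : Fin N))

/-- `det(B Bᴴ)` is real and nonnegative, so taking the real part loses nothing (`ofReal_sqVol`). -/
noncomputable def sqVol {r N : ℕ} (R : Matrix (Fin r) (Fin N) ℂ) (S : Finset (Fin N)) : ℝ :=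
  ((colsSub R S * (colsSub R S)ᴴ).det).re

namespace Matrix

theorem det_add_vecMulVec_sub_vecMulVec {m α : Type*} [Fintype m] [DecidableEq m] [CommRing α]
    {G : Matrix m m α} (hG : IsUnit G.det) (u u' a a' : m → α) :
    (G + vecMulVec u u' - vecMulVec a a').det =
      G.det * ((1 + u' ⬝ᵥ G⁻¹ *ᵥ u) * (1 - a' ⬝ᵥ G⁻¹ *ᵥ a) +
        (u' ⬝ᵥ G⁻¹ *ᵥ a) * (a' ⬝ᵥ G⁻¹ *ᵥ u)) := by
  set U : Matrix (Fin 2) m α := ![u, a]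
  set V : Matrix (Fin 2) m α := ![u', -a']
  have hUV : vecMulVec u u' - vecMulVec a a' = Uᵀ * V := by
    ext k l
    rw [mul_apply, Fin.sum_univ_two, transpose_apply, transpose_apply]
    simp [U, V, vecMulVec_apply, sub_eq_add_neg]
  have hentry : ∀ s t, (V * G⁻¹ * Uᵀ) s t = V s ⬝ᵥ G⁻¹ *ᵥ U t := fun s t => by
    rw [Matrix.mul_assoc]; rfl
  rw [add_sub_assoc, hUV, det_add_mul _ _ hG, det_fin_two]
  simp only [add_apply, one_apply_eq, one_apply_ne zero_ne_one, one_apply_ne one_ne_zero, hentry,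
    U, V, cons_val_zero, cons_val_one, cons_val_fin_one, neg_dotProduct]
  ring

theorem dotProduct_star_self_eq_norm_sq {𝕜 ι : Type*} [RCLike 𝕜] [Fintype ι] (v : ι → 𝕜) :
    star v ⬝ᵥ v = (‖WithLp.toLp 2 v‖ ^ 2 : ℝ) := by
  rw [dotProduct_comm, ← EuclideanSpace.inner_toLp_toLp, inner_self_eq_norm_sq_to_K]
  push_cast
  rfl

section RightPseudoinverse

variable {𝕜 m ι : Type*} [RCLike 𝕜] [Fintype m] [DecidableEq m] [Fintype ι]

/-- The Moore–Penrose pseudoinverse `A⁺` when `A` has full row rank; otherwise `(A Aᴴ)⁻¹` is a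
junk value. -/
noncomputable def rightPinv (A : Matrix m ι 𝕜) : Matrix ι m 𝕜 := Aᴴ * (A * Aᴴ)⁻¹

variable {A : Matrix m ι 𝕜}

theorem mul_rightPinv (hA : IsUnit (A * Aᴴ).det) : A * rightPinv A = 1 := by
  rw [rightPinv, ← Matrix.mul_assoc, mul_nonsing_inv _ hA]

theorem conjTranspose_rightPinv : (rightPinv A)ᴴ = (A * Aᴴ)⁻¹ * A := by
  rw [rightPinv, conjTranspose_mul, conjTranspose_conjTranspose,
    (isHermitian_mul_conjTranspose_self A).inv.eq]

theorem conjTranspose_rightPinv_mul_rightPinv (hA : IsUnit (A * Aᴴ).det) :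
    (rightPinv A)ᴴ * rightPinv A = (A * Aᴴ)⁻¹ := by
  rw [conjTranspose_rightPinv, Matrix.mul_assoc, mul_rightPinv hA, Matrix.mul_one]

theorem isStarProjection_rightPinv_mul (hA : IsUnit (A * Aᴴ).det) :
    IsStarProjection (rightPinv A * A) where
  isIdempotentElem := by
    rw [IsIdempotentElem, Matrix.mul_assoc, ← Matrix.mul_assoc A, mul_rightPinv hA,
      Matrix.one_mul]
  isSelfAdjoint := by
    rw [IsSelfAdjoint, star_eq_conjTranspose, conjTranspose_mul, conjTranspose_rightPinv,
      rightPinv, Matrix.mul_assoc]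

theorem trace_rightPinv_mul (hA : IsUnit (A * Aᴴ).det) :
    (rightPinv A * A).trace = Fintype.card m := by
  rw [trace_mul_comm, mul_rightPinv hA, trace_one]

theorem rightPinv_mulVec_apply (v : m → 𝕜) (j : ι) :
    (rightPinv A *ᵥ v) j = star (Aᵀ j) ⬝ᵥ (A * Aᴴ)⁻¹ *ᵥ v := by
  rw [rightPinv, ← mulVec_mulVec]
  rfl

theorem star_rightPinv_mulVec_apply (v : m → 𝕜) (j : ι) :
    star ((rightPinv A *ᵥ v) j) = star v ⬝ᵥ (A * Aᴴ)⁻¹ *ᵥ Aᵀ j := by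
  rw [rightPinv_mulVec_apply, star_dotProduct, star_star, star_mulVec, ← dotProduct_mulVec,
    (isHermitian_mul_conjTranspose_self A).inv.eq]

theorem rightPinv_mul_apply_self (j : ι) :
    (rightPinv A * A) j j = star (Aᵀ j) ⬝ᵥ (A * Aᴴ)⁻¹ *ᵥ Aᵀ j := by
  rw [← rightPinv_mulVec_apply]
  rfl

theorem star_rightPinv_mulVec_dotProduct (hA : IsUnit (A * Aᴴ).det) (v : m → 𝕜) :
    star (rightPinv A *ᵥ v) ⬝ᵥ rightPinv A *ᵥ v = star v ⬝ᵥ (A * Aᴴ)⁻¹ *ᵥ v := by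
  rw [star_mulVec, ← dotProduct_mulVec, mulVec_mulVec, conjTranspose_rightPinv_mul_rightPinv hA]

open scoped Matrix.Norms.L2Operator in
theorem norm_rightPinv_mul_mulVec_le [DecidableEq ι] (hA : IsUnit (A * Aᴴ).det) (x : ι → 𝕜) :
    ‖WithLp.toLp 2 ((rightPinv A * A) *ᵥ x)‖ ≤ ‖WithLp.toLp 2 x‖ := by
  have hP := isStarProjection_rightPinv_mul hA
  have hP' : IsStarProjection (toEuclideanCLM (𝕜 := 𝕜) (rightPinv A * A)) :=
    ⟨by rw [IsIdempotentElem, ← map_mul, hP.isIdempotentElem.eq],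
     by rw [IsSelfAdjoint, ← map_star, hP.isSelfAdjoint.star_eq]⟩
  simpa using (toEuclideanCLM (𝕜 := 𝕜) (rightPinv A * A)).le_of_opNorm_le hP'.norm_le
    (WithLp.toLp 2 x)

end RightPseudoinverse

end Matrix

theorem norm_sum_smul_le_sqrt_mul_sqrt {𝕜 ι E : Type*} [RCLike 𝕜] [NormedAddCommGroup E]
    [NormedSpace 𝕜 E] (s : Finset ι) (x : ι → 𝕜) (v : ι → E) {σ : ℝ}
    (hv : ∀ i ∈ s, ‖v i‖ ^ 2 ≤ σ) :
    ‖∑ i ∈ s, x i • v i‖ ≤ √(s.card * σ) * √(∑ i ∈ s, ‖x i‖ ^ 2) :=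
  calc ‖∑ i ∈ s, x i • v i‖ ≤ ∑ i ∈ s, ‖v i‖ * ‖x i‖ := by
        simpa only [norm_smul, mul_comm] using norm_sum_le s fun i => x i • v i
    _ ≤ √(∑ i ∈ s, ‖v i‖ ^ 2) * √(∑ i ∈ s, ‖x i‖ ^ 2) := Real.sum_mul_le_sqrt_mul_sqrt _ _ _
    _ ≤ √(s.card * σ) * √(∑ i ∈ s, ‖x i‖ ^ 2) := by
        gcongr
        simpa using Finset.sum_le_card_nsmul s _ σ hv

theorem add_mul_sq_le_one_add_sq_mul_add_sq (a b c : ℝ) :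
    (a + b * c) ^ 2 ≤ (1 + b ^ 2) * (a ^ 2 + c ^ 2) := by
  nlinarith [sq_nonneg (a * b - c)]

section ColumnSubmatrix

variable {r N : ℕ} (R : Matrix (Fin r) (Fin N) ℂ) (S : Finset (Fin N))

theorem mulVec_eq_colsSub_mulVec_add_sum_compl (x : Fin N → ℂ) :
    R *ᵥ x = colsSub R S *ᵥ (fun j : S => x j) + ∑ i ∈ Sᶜ, x i • Rᵀ i := by
  ext k
  simp only [Pi.add_apply, Finset.sum_apply, Pi.smul_apply, smul_eq_mul, transpose_apply, mulVec,
    dotProduct, colsSub, submatrix_apply, id]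
  rw [← Finset.sum_add_sum_compl S, Finset.sum_coe_sort S fun i => R k i * x i]
  simp only [mul_comm]

theorem colsSub_mul_conjTranspose_eq_sum :
    colsSub R S * (colsSub R S)ᴴ = ∑ k ∈ S, vecMulVec (Rᵀ k) (star (Rᵀ k)) := by
  ext a b
  simp only [mul_apply, Matrix.sum_apply, vecMulVec_apply]
  exact Finset.sum_coe_sort S fun k => R a k * star (R b k)

theorem colsSub_mul_conjTranspose_insert_erase {i j : Fin N} (hi : i ∉ S) (hj : j ∈ S) :
    colsSub R (insert i (S.erase j)) * (colsSub R (insert i (S.erase j)))ᴴ =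
      colsSub R S * (colsSub R S)ᴴ + vecMulVec (Rᵀ i) (star (Rᵀ i))
        - vecMulVec (Rᵀ j) (star (Rᵀ j)) := by
  rw [colsSub_mul_conjTranspose_eq_sum, colsSub_mul_conjTranspose_eq_sum,
    Finset.sum_insert fun h => hi (Finset.mem_of_mem_erase h), Finset.sum_erase_eq_sub hj]
  abel

open scoped ComplexOrder in
theorem ofReal_sqVol : (sqVol R S : ℂ) = (colsSub R S * (colsSub R S)ᴴ).det :=
  Complex.ext rfl
    (Complex.nonneg_iff.mp (posSemidef_self_mul_conjTranspose (colsSub R S)).det_nonneg).2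

open scoped ComplexOrder in
theorem sqVol_nonneg : 0 ≤ sqVol R S :=
  (Complex.nonneg_iff.mp (posSemidef_self_mul_conjTranspose (colsSub R S)).det_nonneg).1

variable {R S}

theorem isUnit_det_colsSub_mul_conjTranspose (hvol : sqVol R S ≠ 0) :
    IsUnit (colsSub R S * (colsSub R S)ᴴ).det := by
  rw [← ofReal_sqVol, isUnit_iff_ne_zero]
  exact_mod_cast hvol

theorem det_colsSub_insert_erase (hG : IsUnit (colsSub R S * (colsSub R S)ᴴ).det) {i : Fin N}
    (hi : i ∉ S) (j : S) :
    (colsSub R (insert i (S.erase j)) * (colsSub R (insert i (S.erase j)))ᴴ).det =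
      (colsSub R S * (colsSub R S)ᴴ).det *
        ((1 + star (rightPinv (colsSub R S) *ᵥ Rᵀ i) ⬝ᵥ rightPinv (colsSub R S) *ᵥ Rᵀ i) *
            (1 - (rightPinv (colsSub R S) * colsSub R S) j j) +
          star ((rightPinv (colsSub R S) *ᵥ Rᵀ i) j) * (rightPinv (colsSub R S) *ᵥ Rᵀ i) j) := by
  set A := colsSub R S
  have hτ : star (Rᵀ i) ⬝ᵥ (A * Aᴴ)⁻¹ *ᵥ Rᵀ i =
      star (rightPinv A *ᵥ Rᵀ i) ⬝ᵥ rightPinv A *ᵥ Rᵀ i :=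
    (star_rightPinv_mulVec_dotProduct hG _).symm
  have hp : star (Rᵀ j) ⬝ᵥ (A * Aᴴ)⁻¹ *ᵥ Rᵀ j = (rightPinv A * A) j j :=
    (rightPinv_mul_apply_self (A := A) j).symm
  have hc : star (Rᵀ j) ⬝ᵥ (A * Aᴴ)⁻¹ *ᵥ Rᵀ i = (rightPinv A *ᵥ Rᵀ i) j :=
    (rightPinv_mulVec_apply (A := A) _ j).symm
  have hc' : star (Rᵀ i) ⬝ᵥ (A * Aᴴ)⁻¹ *ᵥ Rᵀ j = star ((rightPinv A *ᵥ Rᵀ i) j) :=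
    (star_rightPinv_mulVec_apply (A := A) _ j).symm
  rw [colsSub_mul_conjTranspose_insert_erase R S hi j.2, det_add_vecMulVec_sub_vecMulVec hG,
    hτ, hp, hc, hc']

theorem sum_exchange_factor_eq (hG : IsUnit (colsSub R S * (colsSub R S)ᴴ).det) (c : S → ℂ) :
    ∑ j : S, ((1 + star c ⬝ᵥ c) * (1 - (rightPinv (colsSub R S) * colsSub R S) j j) +
        star (c j) * c j) =
      (1 + star c ⬝ᵥ c) * (S.card - r) + star c ⬝ᵥ c := by
  have htr : ∑ j : S, (rightPinv (colsSub R S) * colsSub R S) j j = r := by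
    have h := trace_rightPinv_mul hG
    rw [Fintype.card_fin] at h
    exact h
  rw [Finset.sum_add_distrib, ← Finset.mul_sum, Finset.sum_sub_distrib, htr]
  simp [dotProduct]

theorem sq_norm_rightPinv_mulVec_col_le (hvol : sqVol R S ≠ 0) {i : Fin N} (hi : i ∉ S)
    (hloc : ∀ j ∈ S, sqVol R (insert i (S.erase j)) ≤ sqVol R S) :
    ((S.card : ℝ) - r + 1) * ‖WithLp.toLp 2 (rightPinv (colsSub R S) *ᵥ Rᵀ i)‖ ^ 2 ≤ r := by
  set c := rightPinv (colsSub R S) *ᵥ Rᵀ i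
  have hpos : 0 < sqVol R S := (sqVol_nonneg R S).lt_of_ne' hvol
  have hG := isUnit_det_colsSub_mul_conjTranspose hvol
  have hfactor : ∀ j : S, ((1 + star c ⬝ᵥ c) *
      (1 - (rightPinv (colsSub R S) * colsSub R S) j j) + star (c j) * c j).re ≤ 1 := by
    intro j
    have h := hloc j j.2
    rw [sqVol, det_colsSub_insert_erase hG hi j, ← ofReal_sqVol, Complex.re_ofReal_mul] at h
    exact le_of_mul_le_mul_left (by simpa using h) hpos
  have hsum : (1 + ‖WithLp.toLp 2 c‖ ^ 2) * (S.card - r) + ‖WithLp.toLp 2 c‖ ^ 2 ≤ S.card := by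
    have h := Finset.sum_le_sum fun j (_ : j ∈ Finset.univ) => hfactor j
    rw [← Complex.re_sum, sum_exchange_factor_eq hG, dotProduct_star_self_eq_norm_sq] at h
    simpa [Complex.mul_re, -Complex.ofReal_pow] using h
  linarith

end ColumnSubmatrix

theorem statement13_general (r n N : ℕ) (hrn : r ≤ n)
    (R : Matrix (Fin r) (Fin N) ℂ)
    (S : Finset (Fin N)) (hS : S.card = n)
    (hvol : sqVol R S ≠ 0)
    (hloc : ∀ j ∈ S, ∀ i ∉ S, sqVol R (insert i (S.erase j)) ≤ sqVol R S) :
    ∀ x : Fin N → ℂ,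
      (∑ j, ‖(((colsSub R S)ᴴ * (colsSub R S * (colsSub R S)ᴴ)⁻¹) *ᵥ (R *ᵥ x)) j‖ ^ 2)
        ≤ (1 + (r : ℝ) * ((N : ℝ) - (n : ℝ)) / ((n : ℝ) - (r : ℝ) + 1))
            * ∑ i, ‖x i‖ ^ 2 := by
  intro x
  subst hS
  set A := colsSub R S
  set xS : S → ℂ := fun j => x j
  set Xc := ∑ i ∈ Sᶜ, ‖x i‖ ^ 2
  set K : ℝ := Sᶜ.card * (r / (S.card - r + 1)) with hKdef
  have hden : (0 : ℝ) < S.card - r + 1 := by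
    have : (r : ℝ) ≤ S.card := by exact_mod_cast hrn
    linarith
  have hcol : ∀ i ∈ Sᶜ, ‖WithLp.toLp 2 (rightPinv A *ᵥ Rᵀ i)‖ ^ 2 ≤ r / (S.card - r + 1) :=
    fun i hi => (le_div_iff₀' hden).2 <| sq_norm_rightPinv_mulVec_col_le hvol
      (Finset.mem_compl.1 hi) fun j hj => hloc j hj i (Finset.mem_compl.1 hi)
  have hy : rightPinv A *ᵥ (R *ᵥ x) =
      (rightPinv A * A) *ᵥ xS + ∑ i ∈ Sᶜ, x i • rightPinv A *ᵥ Rᵀ i := by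
    rw [mulVec_eq_colsSub_mulVec_add_sum_compl R S, mulVec_add, mulVec_mulVec, mulVec_sum]
    simp only [mulVec_smul]
    rfl
  have hnorm : ‖WithLp.toLp 2 (rightPinv A *ᵥ (R *ᵥ x))‖ ≤ ‖WithLp.toLp 2 xS‖ + √K * √Xc := by
    rw [hy, WithLp.toLp_add, WithLp.toLp_sum]
    refine (norm_add_le _ _).trans (add_le_add (norm_rightPinv_mul_mulVec_le
      (isUnit_det_colsSub_mul_conjTranspose hvol) _) ?_)
    simpa only [WithLp.toLp_smul] using norm_sum_smul_le_sqrt_mul_sqrt Sᶜ x _ hcol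
  have hsplit : ‖WithLp.toLp 2 xS‖ ^ 2 + Xc = ∑ i, ‖x i‖ ^ 2 := by
    rw [EuclideanSpace.norm_sq_eq, Finset.sum_coe_sort S fun i => ‖x i‖ ^ 2,
      Finset.sum_add_sum_compl]
  have hK : 1 + (r : ℝ) * (N - S.card) / (S.card - r + 1) = 1 + K := by
    rw [hKdef, Finset.card_compl, Fintype.card_fin, Nat.cast_sub (by simpa using S.card_le_univ)]
    ring
  calc _ = ‖WithLp.toLp 2 (rightPinv A *ᵥ (R *ᵥ x))‖ ^ 2 := (EuclideanSpace.norm_sq_eq _).symm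
    _ ≤ (‖WithLp.toLp 2 xS‖ + √K * √Xc) ^ 2 := pow_le_pow_left₀ (norm_nonneg _) hnorm 2
    _ ≤ (1 + √K ^ 2) * (‖WithLp.toLp 2 xS‖ ^ 2 + √Xc ^ 2) :=
      add_mul_sq_le_one_add_sq_mul_add_sq _ _ _
    _ = _ := by rw [Real.sq_sqrt (by positivity), Real.sq_sqrt (by positivity), hsplit, hK]

/-- If `R` has full row rank and `Â = R_{:,S}` is an `r × n` column submatrix of nonzero
volume with locally maximal volume under single-column exchanges, then for every `x ∈ ℂ^N`,
`‖Â⁺ (R x)‖₂² ≤ (1 + r(N−n)/(n−r+1))·‖x‖₂²`, where `Â⁺ = Âᴴ(Â Âᴴ)⁻¹`; equivalently,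
`‖Â⁺ R‖₂ ≤ √(1 + r(N−n)/(n−r+1))`. -/
theorem statement13 (r n N : ℕ) (hrn : r ≤ n) (hnN : n ≤ N)
    (R : Matrix (Fin r) (Fin N) ℂ) (hR : IsUnit (R * Rᴴ).det)
    (S : Finset (Fin N)) (hS : S.card = n)
    (hvol : sqVol R S ≠ 0)
    (hloc : ∀ j ∈ S, ∀ i ∉ S, sqVol R (insert i (S.erase j)) ≤ sqVol R S) :
    ∀ x : Fin N → ℂ,
      (∑ j, ‖(((colsSub R S)ᴴ * (colsSub R S * (colsSub R S)ᴴ)⁻¹) *ᵥ (R *ᵥ x)) j‖ ^ 2)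
        ≤ (1 + (r : ℝ) * ((N : ℝ) - (n : ℝ)) / ((n : ℝ) - (r : ℝ) + 1))
            * ∑ i, ‖x i‖ ^ 2 :=
  statement13_general r n N hrn R S hS hvol hloc
end
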